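/- arXiv:2601.06773 — 6 statements merged into one kernel-verified Lean document; each statement's English description precedes it below -/
import Mathlib

section
/- Let T > 0 and let α : [0,T] → ℝ be continuously differentiable with 0 < α(z) for all z ∈ [0,T], sup_{z∈[0,T]} α(z) < α* for some α* < 1, and |α'(z)| ≤ M for all z ∈ [0,T]. Define ψ(x) = Γ'(x)/Γ(x) (the logarithmic derivative of the Euler Gamma function) and, for t ∈ (0,T], g̃(t) = ∫_0^t (t^{−α(z)}/Γ(1−α(z))) [ −α'(z) ln t + ψ(1−α(z)) (1−α(z)) α'(z)/(1−α(z)) ] dz, i.e. g̃(t) = ∫_0^t (t^{−α(z)}/Γ(1−α(z))) [ −α'(z) ln t + ψ(1−α(z)) α'(z) ] dz (the kernel arising from the perturbation reformulation). Then g̃(t) → 0 as t → 0⁺, g̃ is differentiable on (0,T], and there exists a constant C > 0 such that |g̃'(t)| ≤ C t^{−α*} for all t ∈ (0,T]. -/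
/-! Writing `P(t, a) = t^{-a} / Γ(1 - a)`, the integrand of `g̃(t)` is `∂_z P(t, α z)`, so
`g̃(t) = P(t, α t) - P(t, α 0)`. Uniformly for exponents `a` in the compact range of `α`,
`P(t, a) (1 + |log t|) ≤ C t^{-α*}`, because `α* - a` stays bounded away from `0`; hence
`|g̃(t)| ≤ C t^{1 - α*} → 0`. Differentiating in `t` produces the singular terms
`(α t P(t, α t) - α 0 P(t, α 0)) / t`, a difference quotient of `z ↦ α z P(t, α z)` which the
mean value theorem turns into a derivative, again bounded by `C t^{-α*}`. -/

open MeasureTheory intervalIntegral Set Filter Topology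

/-- The logarithmic derivative `ψ = Γ'/Γ` of the Euler Gamma function. -/
noncomputable def psiGamma (x : ℝ) : ℝ := deriv Real.Gamma x / Real.Gamma x

/-- The kernel `g̃` arising from the perturbation reformulation of the
variable-exponent subdiffusion equation. -/
noncomputable def gtilde (α α' : ℝ → ℝ) (t : ℝ) : ℝ :=
  ∫ z in (0:ℝ)..t, (t ^ (-(α z)) / Real.Gamma (1 - α z)) *
    (-(α' z) * Real.log t + psiGamma (1 - α z) * α' z)

theorem continuousOn_deriv_Gamma : ContinuousOn (deriv Real.Gamma) (Ioi 0) := by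
  have hne : ∀ s : ℂ, 0 < s.re → ∀ m : ℕ, s ≠ -m := fun s hs m hsm => by
    rw [hsm] at hs
    simp only [Complex.neg_re, Complex.natCast_re] at hs
    linarith [(Nat.cast_nonneg m : (0:ℝ) ≤ m)]
  have hcd : ContinuousOn (deriv Complex.Gamma) {s : ℂ | 0 < s.re} :=
    (DifferentiableOn.analyticOnNhd
      (fun s hs => (Complex.differentiableAt_Gamma s (hne s hs)).differentiableWithinAt)
      (isOpen_lt continuous_const Complex.continuous_re)).deriv.continuousOn
  have heq : ∀ x ∈ Ioi (0:ℝ), deriv Real.Gamma x = (deriv Complex.Gamma x).re := by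
    intro x hx
    have h := (Complex.differentiableAt_Gamma x
      (hne x (by simpa using hx))).hasDerivAt.real_of_complex
    simp only [Complex.Gamma_ofReal, Complex.ofReal_re] at h
    exact h.deriv
  refine ContinuousOn.congr ?_ heq
  exact Complex.continuous_re.comp_continuousOn
    (hcd.comp Complex.continuous_ofReal.continuousOn fun x hx => by simpa using hx)

theorem continuousOn_psiGamma : ContinuousOn psiGamma (Ioi 0) :=
  continuousOn_deriv_Gamma.div (fun x hx => (Real.differentiableAt_Gamma fun m => by
      linarith [(Nat.cast_nonneg m : (0:ℝ) ≤ m), mem_Ioi.1 hx]).continuousAt.continuousWithinAt)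
    fun x hx => (Real.Gamma_pos_of_pos hx).ne'

/-- The Riemann–Liouville kernel `ω_{1-a}(t)`. -/
noncomputable def rlKernel (a t : ℝ) : ℝ := t ^ (-a) / Real.Gamma (1 - a)

theorem rlKernel_pos {a t : ℝ} (ht : 0 < t) (ha : a < 1) : 0 < rlKernel a t :=
  div_pos (Real.rpow_pos_of_pos ht _) (Real.Gamma_pos_of_pos (by linarith))

theorem hasDerivAt_Gamma_one_sub {a : ℝ} (ha : a < 1) :
    HasDerivAt (fun b => Real.Gamma (1 - b)) (-deriv Real.Gamma (1 - a)) a := by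
  have hG : HasDerivAt Real.Gamma (deriv Real.Gamma (1 - a)) (1 - a) :=
    (Real.differentiableAt_Gamma fun m => by
      linarith [(Nat.cast_nonneg m : (0:ℝ) ≤ m)]).hasDerivAt
  have h1 : HasDerivAt (fun b : ℝ => 1 - b) (-1) a := by
    simpa using (hasDerivAt_id a).const_sub 1
  exact (hG.comp a h1).congr_deriv (by ring)

theorem HasDerivAt.rlKernel {a u : ℝ → ℝ} {a' u' x : ℝ} (ha : HasDerivAt a a' x)
    (hu : HasDerivAt u u' x) (hux : 0 < u x) (hax : a x < 1) :
    HasDerivAt (fun s => rlKernel (a s) (u s))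
      (rlKernel (a x) (u x) * (a' * (psiGamma (1 - a x) - Real.log (u x)) - a x * u' / u x)) x := by
  have hΓ : Real.Gamma (1 - a x) ≠ 0 := (Real.Gamma_pos_of_pos (by linarith)).ne'
  refine ((hu.rpow ha.neg hux).div ((hasDerivAt_Gamma_one_sub hax).comp x ha) hΓ).congr_deriv ?_
  simp only [_root_.rlKernel, psiGamma, Function.comp_apply, Pi.neg_apply]
  rw [Real.rpow_sub_one hux.ne']
  field_simp
  ring

theorem continuousOn_rlKernel_exponent {t : ℝ} (ht : 0 < t) :
    ContinuousOn (fun a => rlKernel a t) (Iio 1) := fun a ha =>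
  ((hasDerivAt_id a).rlKernel (hasDerivAt_const a t) ht ha).continuousAt.continuousWithinAt

noncomputable def gtildeIntegrand (α α' : ℝ → ℝ) (t z : ℝ) : ℝ :=
  rlKernel (α z) t * (α' z * (psiGamma (1 - α z) - Real.log t))

theorem gtilde_eq_integral (α α' : ℝ → ℝ) (t : ℝ) :
    gtilde α α' t = ∫ z in (0:ℝ)..t, gtildeIntegrand α α' t z := by
  unfold gtilde gtildeIntegrand rlKernel
  congr 1
  ext z
  ring

theorem hasDerivAt_rlKernel_comp {α α' : ℝ → ℝ} {t z : ℝ} (ht : 0 < t)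
    (hα : HasDerivAt α (α' z) z) (hz : α z < 1) :
    HasDerivAt (fun z => rlKernel (α z) t) (gtildeIntegrand α α' t z) z := by
  simpa [gtildeIntegrand] using hα.rlKernel (hasDerivAt_const z t) ht hz

theorem continuousOn_gtildeIntegrand {α α' : ℝ → ℝ} {s : Set ℝ} {t : ℝ} (ht : 0 < t)
    (hα : ContinuousOn α s) (hα' : ContinuousOn α' s) (hlt : ∀ z ∈ s, α z < 1) :
    ContinuousOn (gtildeIntegrand α α' t) s := by
  have hψ : ContinuousOn (fun z => psiGamma (1 - α z)) s :=
    continuousOn_psiGamma.comp (continuousOn_const.sub hα) fun z hz => by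
      simpa using hlt z hz
  exact ((continuousOn_rlKernel_exponent ht).comp hα hlt).mul
    (hα'.mul (hψ.sub continuousOn_const))

theorem gtilde_eq_rlKernel_sub {α α' : ℝ → ℝ} {t : ℝ} (ht : 0 < t)
    (hα : ∀ z ∈ Icc 0 t, HasDerivAt α (α' z) z) (hα' : ContinuousOn α' (Icc 0 t))
    (hlt : ∀ z ∈ Icc 0 t, α z < 1) :
    gtilde α α' t = rlKernel (α t) t - rlKernel (α 0) t := by
  rw [gtilde_eq_integral]
  refine intervalIntegral.integral_eq_sub_of_hasDerivAt (f := fun z => rlKernel (α z) t)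
    (fun z hz => ?_) ?_
  · rw [uIcc_of_le ht.le] at hz
    exact hasDerivAt_rlKernel_comp ht (hα z hz) (hlt z hz)
  · refine ContinuousOn.intervalIntegrable ?_
    rw [uIcc_of_le ht.le]
    exact continuousOn_gtildeIntegrand ht
      (fun z hz => (hα z hz).continuousAt.continuousWithinAt) hα' hlt

theorem hasDerivWithinAt_gtilde {α α' : ℝ → ℝ} {T t : ℝ} (ht : t ∈ Ioc 0 T)
    (hα : ∀ z ∈ Icc 0 T, HasDerivAt α (α' z) z) (hα' : ContinuousOn α' (Icc 0 T))
    (hlt : ∀ z ∈ Icc 0 T, α z < 1) :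
    HasDerivWithinAt (gtilde α α')
      (gtildeIntegrand α α' t t - (α t * rlKernel (α t) t - α 0 * rlKernel (α 0) t) / t)
      (Ioc 0 T) t := by
  have hsub : ∀ {s}, s ∈ Ioc 0 T → Icc 0 s ⊆ Icc 0 T := fun hs => Icc_subset_Icc le_rfl hs.2
  have heq : EqOn (gtilde α α') (fun s => rlKernel (α s) s - rlKernel (α 0) s) (Ioc 0 T) :=
    fun s hs => gtilde_eq_rlKernel_sub hs.1 (fun z hz => hα z (hsub hs hz))
      (hα'.mono (hsub hs)) fun z hz => hlt z (hsub hs hz)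
  have htT : t ∈ Icc 0 T := Ioc_subset_Icc_self ht
  have hdiag := (hα t htT).rlKernel (hasDerivAt_id t) ht.1 (hlt t htT)
  have hfixed := (hasDerivAt_const t (α 0)).rlKernel (hasDerivAt_id t) ht.1
    (hlt 0 (left_mem_Icc.2 (ht.1.le.trans ht.2)))
  refine ((hdiag.sub hfixed).hasDerivWithinAt.congr heq (heq ht)).congr_deriv ?_
  simp only [gtildeIntegrand, id]
  field_simp
  ring

theorem exists_mul_rlKernel_slope_eq {α α' : ℝ → ℝ} {t : ℝ} (ht : 0 < t)
    (hα : ∀ z ∈ Icc 0 t, HasDerivAt α (α' z) z) (hlt : ∀ z ∈ Icc 0 t, α z < 1) :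
    ∃ ξ ∈ Ioo 0 t, (α t * rlKernel (α t) t - α 0 * rlKernel (α 0) t) / t =
      α' ξ * rlKernel (α ξ) t + α ξ * gtildeIntegrand α α' t ξ := by
  have hH : ∀ z ∈ Icc 0 t, HasDerivAt (fun z => α z * rlKernel (α z) t)
      (α' z * rlKernel (α z) t + α z * gtildeIntegrand α α' t z) z := fun z hz =>
    (hα z hz).mul (hasDerivAt_rlKernel_comp ht (hα z hz) (hlt z hz))
  obtain ⟨ξ, hξ, hslope⟩ := exists_hasDerivAt_eq_slope _ _ ht
    (fun z hz => (hH z hz).continuousAt.continuousWithinAt)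
    fun z hz => hH z (Ioo_subset_Icc_self hz)
  exact ⟨ξ, hξ, by rw [hslope, sub_zero]⟩

theorem rpow_mul_one_add_abs_log_le {δ c T t : ℝ} (hδ : 0 < δ) (hδc : δ ≤ c) (hc : c ≤ 1)
    (ht : t ∈ Ioc 0 T) :
    t ^ c * (1 + |Real.log t|) ≤ 1 + 1 / δ + T * (1 + T) := by
  obtain ⟨ht0, htT⟩ := ht
  have hT : 0 < T := ht0.trans_le htT
  rcases le_or_gt t 1 with ht1 | ht1
  · have hpow : t ^ c ≤ 1 := Real.rpow_le_one ht0.le ht1 (hδ.le.trans hδc)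
    -- `t ^ δ |log t|` is bounded on `(0, 1]`, and `t ^ c ≤ t ^ δ` there
    have hlog : t ^ c * |Real.log t| < 1 / δ := by
      have h := Real.abs_log_mul_self_rpow_lt t δ ht0 ht1 hδ
      rw [abs_mul, abs_of_pos (Real.rpow_pos_of_pos ht0 δ), mul_comm] at h
      exact lt_of_le_of_lt (mul_le_mul_of_nonneg_right
        (Real.rpow_le_rpow_of_exponent_ge ht0 ht1 hδc) (abs_nonneg _)) h
    have : 0 ≤ T * (1 + T) := by positivity
    rw [mul_one_add]
    linarith
  · have hpow : t ^ c ≤ T := (Real.rpow_le_rpow_of_exponent_le ht1.le hc).trans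
      ((Real.rpow_one t).le.trans htT)
    have hlog : |Real.log t| ≤ T := by
      rw [abs_of_nonneg (Real.log_nonneg ht1.le)]
      linarith [Real.log_le_sub_one_of_pos ht0]
    have : t ^ c * (1 + |Real.log t|) ≤ T * (1 + T) :=
      mul_le_mul hpow (by linarith) (by positivity) (by linarith)
    linarith [one_div_pos.2 hδ]

theorem exists_rlKernel_mul_one_add_abs_log_le {S : Set ℝ} {β : ℝ} (hS : IsCompact S)
    (hS0 : ∀ a ∈ S, 0 ≤ a) (hSβ : ∀ a ∈ S, a < β) (hβ : β ≤ 1) (T : ℝ) :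
    ∃ C > 0, ∀ a ∈ S, ∀ t ∈ Ioc 0 T,
      rlKernel a t * (1 + |Real.log t|) ≤ C * t ^ (-β) := by
  rcases S.eq_empty_or_nonempty with rfl | hne
  · exact ⟨1, one_pos, by simp⟩
  obtain ⟨amax, hamax, hmax⟩ := hS.exists_isMaxOn hne continuousOn_id
  have hΓ : ∀ a ∈ S, 0 < Real.Gamma (1 - a) := fun a ha =>
    Real.Gamma_pos_of_pos (by linarith [hSβ a ha])
  obtain ⟨B, hB⟩ := hS.exists_bound_of_continuousOn
    (ContinuousOn.inv₀ (fun a ha =>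
      (hasDerivAt_Gamma_one_sub (by linarith [hSβ a ha])).continuousAt.continuousWithinAt)
      fun a ha => (hΓ a ha).ne')
  set K := 1 + 1 / (β - amax) + T * (1 + T)
  refine ⟨(|B| + 1) * (|K| + 1), by positivity, fun a ha t ht => ?_⟩
  have hδ : 0 < β - amax := sub_pos.2 (hSβ amax hamax)
  have hinv : (Real.Gamma (1 - a))⁻¹ ≤ |B| + 1 := by
    have := hB a ha
    rw [Pi.inv_apply, Real.norm_eq_abs, abs_of_pos (inv_pos.2 (hΓ a ha))] at this
    linarith [le_abs_self B]
  have hK : t ^ (β - a) * (1 + |Real.log t|) ≤ |K| + 1 :=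
    (rpow_mul_one_add_abs_log_le hδ (by linarith [show a ≤ amax from hmax ha])
      (by linarith [hS0 a ha]) ht).trans (by linarith [le_abs_self K])
  have hsplit : rlKernel a t * (1 + |Real.log t|) =
      (Real.Gamma (1 - a))⁻¹ * (t ^ (β - a) * (1 + |Real.log t|)) * t ^ (-β) := by
    rw [rlKernel, show -a = (β - a) + -β by ring, Real.rpow_add ht.1]
    ring
  rw [hsplit]
  exact mul_le_mul_of_nonneg_right (mul_le_mul hinv hK
    (mul_nonneg (Real.rpow_nonneg ht.1.le _) (by positivity)) (by positivity))
    (Real.rpow_nonneg ht.1.le _)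

theorem abs_gtildeIntegrand_le {α α' : ℝ → ℝ} {t z M B : ℝ} (ht : 0 < t) (hz : α z < 1)
    (hM : |α' z| ≤ M) (hψ : |psiGamma (1 - α z)| ≤ B) :
    |gtildeIntegrand α α' t z| ≤ M * (1 + B) * (rlKernel (α z) t * (1 + |Real.log t|)) := by
  have hB : 0 ≤ B := (abs_nonneg _).trans hψ
  have hlog : |psiGamma (1 - α z) - Real.log t| ≤ (1 + B) * (1 + |Real.log t|) := by
    nlinarith [abs_sub (psiGamma (1 - α z)) (Real.log t), abs_nonneg (Real.log t)]
  rw [gtildeIntegrand, abs_mul, abs_mul, abs_of_pos (rlKernel_pos ht hz)]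
  calc rlKernel (α z) t * (|α' z| * |psiGamma (1 - α z) - Real.log t|)
      ≤ rlKernel (α z) t * (M * ((1 + B) * (1 + |Real.log t|))) := by
        gcongr
        · exact (rlKernel_pos ht hz).le
        · exact (abs_nonneg _).trans hM
    _ = M * (1 + B) * (rlKernel (α z) t * (1 + |Real.log t|)) := by ring

theorem exists_rlKernel_le_and_abs_gtildeIntegrand_le {α α' : ℝ → ℝ} {T β M : ℝ}
    (hα : ContinuousOn α (Icc 0 T)) (hpos : ∀ z ∈ Icc 0 T, 0 ≤ α z)
    (hlt : ∀ z ∈ Icc 0 T, α z < β) (hβ : β ≤ 1) (hM : ∀ z ∈ Icc 0 T, |α' z| ≤ M) :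
    ∃ C > 0, ∀ t ∈ Ioc 0 T, ∀ z ∈ Icc 0 T,
      rlKernel (α z) t ≤ C * t ^ (-β) ∧ |gtildeIntegrand α α' t z| ≤ C * t ^ (-β) := by
  have hlt1 : ∀ z ∈ Icc 0 T, α z < 1 := fun z hz => (hlt z hz).trans_le hβ
  obtain ⟨C₀, hC₀, hC₀bound⟩ := exists_rlKernel_mul_one_add_abs_log_le
    (isCompact_Icc.image_of_continuousOn hα) (forall_mem_image.2 hpos)
    (forall_mem_image.2 hlt) hβ T
  obtain ⟨B, hB⟩ := isCompact_Icc.exists_bound_of_continuousOn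
    (continuousOn_psiGamma.comp (continuousOn_const.sub hα) fun z hz => by
      simpa using hlt1 z hz)
  refine ⟨(1 + |M| * (1 + |B|)) * C₀, by positivity, fun t ht z hz => ?_⟩
  have hK := hC₀bound (α z) (mem_image_of_mem α hz) t ht
  have htβ : 0 ≤ C₀ * t ^ (-β) := mul_nonneg hC₀.le (Real.rpow_nonneg ht.1.le _)
  have hP : rlKernel (α z) t ≤ rlKernel (α z) t * (1 + |Real.log t|) :=
    le_mul_of_one_le_right (rlKernel_pos ht.1 (hlt1 z hz)).le
      (by linarith [abs_nonneg (Real.log t)])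
  have hI := abs_gtildeIntegrand_le ht.1 (hlt1 z hz) ((hM z hz).trans (le_abs_self M))
    ((show |psiGamma (1 - α z)| ≤ B by simpa using hB z hz).trans (le_abs_self B))
  constructor
  · nlinarith [mul_nonneg (abs_nonneg M) (by positivity : (0:ℝ) ≤ 1 + |B|)]
  · nlinarith [mul_le_mul_of_nonneg_left hK (by positivity : (0:ℝ) ≤ |M| * (1 + |B|))]

theorem abs_gtilde_le {α α' : ℝ → ℝ} {t X : ℝ} (ht : 0 < t)
    (hI : ∀ z ∈ Icc 0 t, |gtildeIntegrand α α' t z| ≤ X) :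
    |gtilde α α' t| ≤ X * t := by
  have h := intervalIntegral.norm_integral_le_of_norm_le_const (a := 0) (b := t)
    (f := gtildeIntegrand α α' t) fun z hz => by
      rw [Real.norm_eq_abs]
      exact hI z (Ioc_subset_Icc_self (uIoc_of_le ht.le ▸ hz))
  rwa [← gtilde_eq_integral, sub_zero, abs_of_pos ht] at h

theorem abs_derivWithin_gtilde_le {α α' : ℝ → ℝ} {T t M X : ℝ} (ht : t ∈ Ioc 0 T)
    (hα : ∀ z ∈ Icc 0 T, HasDerivAt α (α' z) z) (hα' : ContinuousOn α' (Icc 0 T))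
    (hpos : ∀ z ∈ Icc 0 T, 0 ≤ α z) (hlt : ∀ z ∈ Icc 0 T, α z < 1)
    (hM : ∀ z ∈ Icc 0 T, |α' z| ≤ M) (hP : ∀ z ∈ Icc 0 T, rlKernel (α z) t ≤ X)
    (hI : ∀ z ∈ Icc 0 T, |gtildeIntegrand α α' t z| ≤ X) :
    |derivWithin (gtilde α α') (Ioc 0 T) t| ≤ (2 + M) * X := by
  have hsub : Icc 0 t ⊆ Icc 0 T := Icc_subset_Icc le_rfl ht.2
  rw [(hasDerivWithinAt_gtilde ht hα hα' hlt).derivWithin (uniqueDiffOn_Ioc 0 T t ht)]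
  obtain ⟨ξ, hξ, hslope⟩ := exists_mul_rlKernel_slope_eq ht.1 (fun z hz => hα z (hsub hz))
    fun z hz => hlt z (hsub hz)
  have hξT : ξ ∈ Icc 0 T := hsub (Ioo_subset_Icc_self hξ)
  have hαξ : |α ξ| ≤ 1 := abs_le.2 ⟨by linarith [hpos ξ hξT], (hlt ξ hξT).le⟩
  have hPξ : |α' ξ * rlKernel (α ξ) t| ≤ M * X := by
    rw [abs_mul, abs_of_pos (rlKernel_pos ht.1 (hlt ξ hξT))]
    exact mul_le_mul (hM ξ hξT) (hP ξ hξT) (rlKernel_pos ht.1 (hlt ξ hξT)).le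
      ((abs_nonneg _).trans (hM ξ hξT))
  have hIξ : |α ξ * gtildeIntegrand α α' t ξ| ≤ X := by
    rw [abs_mul]
    exact (mul_le_mul hαξ (hI ξ hξT) (abs_nonneg _) zero_le_one).trans_eq (one_mul X)
  rw [hslope]
  calc |gtildeIntegrand α α' t t -
        (α' ξ * rlKernel (α ξ) t + α ξ * gtildeIntegrand α α' t ξ)|
      ≤ |gtildeIntegrand α α' t t| + (|α' ξ * rlKernel (α ξ) t| +
          |α ξ * gtildeIntegrand α α' t ξ|) :=
        (abs_sub _ _).trans (add_le_add le_rfl (abs_add_le _ _))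
    _ ≤ X + (M * X + X) := by gcongr; exact hI t (Ioc_subset_Icc_self ht)
    _ = (2 + M) * X := by ring

theorem tendsto_nhdsGT_zero_of_abs_le_rpow {f : ℝ → ℝ} {T C p : ℝ} (hT : 0 < T) (hp : 0 < p)
    (hf : ∀ t ∈ Ioc 0 T, |f t| ≤ C * t ^ p) :
    Tendsto f (𝓝[>] 0) (𝓝 0) := by
  have hlim : Tendsto (fun t : ℝ => C * t ^ p) (𝓝[>] 0) (𝓝 0) := by
    simpa [Real.zero_rpow hp.ne'] using
      (((Real.continuous_rpow_const hp.le).tendsto 0).const_mul C).mono_left nhdsWithin_le_nhds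
  refine squeeze_zero_norm' ?_ hlim
  filter_upwards [Ioc_mem_nhdsGT hT] with t ht using hf t ht

theorem stmt_0 (T αstar M : ℝ) (hT : 0 < T) (hαstar : αstar < 1)
    (α α' : ℝ → ℝ)
    (hderiv : ∀ z ∈ Set.Icc (0:ℝ) T, HasDerivAt α (α' z) z)
    (hcont : ContinuousOn α' (Set.Icc 0 T))
    (hpos : ∀ z ∈ Set.Icc (0:ℝ) T, 0 < α z)
    (hsup : ∀ z ∈ Set.Icc (0:ℝ) T, α z < αstar)
    (hM : ∀ z ∈ Set.Icc (0:ℝ) T, |α' z| ≤ M) :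
    Filter.Tendsto (gtilde α α') (nhdsWithin 0 (Set.Ioi 0)) (nhds 0) ∧
    DifferentiableOn ℝ (gtilde α α') (Set.Ioc 0 T) ∧
    ∃ C > 0, ∀ t ∈ Set.Ioc (0:ℝ) T,
      |derivWithin (gtilde α α') (Set.Ioc 0 T) t| ≤ C * t ^ (-αstar) := by
  have hnonneg : ∀ z ∈ Icc 0 T, 0 ≤ α z := fun z hz => (hpos z hz).le
  have hlt : ∀ z ∈ Icc 0 T, α z < 1 := fun z hz => (hsup z hz).trans hαstar
  have hM0 : 0 ≤ M := (abs_nonneg _).trans (hM 0 (left_mem_Icc.2 hT.le))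
  obtain ⟨C, hC, hbound⟩ := exists_rlKernel_le_and_abs_gtildeIntegrand_le
    (fun z hz => (hderiv z hz).continuousAt.continuousWithinAt) hnonneg hsup hαstar.le hM
  refine ⟨?_, fun t ht => (hasDerivWithinAt_gtilde ht hderiv hcont hlt).differentiableWithinAt,
    (2 + M) * C, by positivity, fun t ht => ?_⟩
  · refine tendsto_nhdsGT_zero_of_abs_le_rpow (C := C) hT (sub_pos.2 hαstar) fun t ht => ?_
    calc |gtilde α α' t| ≤ C * t ^ (-αstar) * t :=
          abs_gtilde_le ht.1 fun z hz => (hbound t ht z (Icc_subset_Icc le_rfl ht.2 hz)).2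
      _ = C * t ^ (1 - αstar) := by
          rw [sub_eq_neg_add, Real.rpow_add ht.1, Real.rpow_one, mul_assoc]
  · rw [mul_assoc]
    exact abs_derivWithin_gtilde_le ht hderiv hcont hnonneg hlt hM
      (fun z hz => (hbound t ht z hz).1) fun z hz => (hbound t ht z hz).2
end

section
/- Let 0 = t_0 < t_1 < ⋯ < t_N be a partition of [0,T] with step sizes τ_k = t_k − t_{k−1}, let 0 < α < 1, and let a^{(n)}_{n−k} be the nonuniform L1 weights and P^{(n)}_{n−k} the complementary discrete convolution kernels. Then for all 1 ≤ k ≤ n ≤ N one has 0 < P^{(n)}_{n−k} ≤ Γ(2−α) τ_k^{α}. -/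
/-- `β_ν(t) = t^(ν-1)/Γ(ν)`. -/
noncomputable def betaK (ν t : ℝ) : ℝ := t ^ (ν - 1) / Real.Gamma ν

theorem stmt_2 (T : ℝ) (N : ℕ) (hN : 1 ≤ N) (t : ℕ → ℝ) (α : ℝ)
    (hα0 : 0 < α) (hα1 : α < 1)
    (ht0 : t 0 = 0) (htN : t N = T)
    (hmono : ∀ i j : ℕ, i < j → j ≤ N → t i < t j)
    (a : ℕ → ℕ → ℝ)
    (ha : ∀ n k : ℕ, 1 ≤ k → k ≤ n → n ≤ N →
      a n (n - k) =
        (betaK (2 - α) (t n - t (k - 1)) - betaK (2 - α) (t n - t k)) / (t k - t (k - 1)))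
    (P : ℕ → ℕ → ℝ)
    (hP0 : ∀ n : ℕ, 1 ≤ n → n ≤ N → P n 0 = 1 / a n 0)
    (hPrec : ∀ n k : ℕ, 1 ≤ k → k + 1 ≤ n → n ≤ N →
      P n (n - k) = (1 / a k 0) *
        ∑ j ∈ Finset.Icc (k + 1) n, (a j (j - k - 1) - a j (j - k)) * P n (n - j)) :
    ∀ n k : ℕ, 1 ≤ k → k ≤ n → n ≤ N →
      0 < P n (n - k) ∧ P n (n - k) ≤ Real.Gamma (2 - α) * (t k - t (k - 1)) ^ α := by
  set G := Real.Gamma (2 - α) with hGdef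
  have hG : 0 < G := Real.Gamma_pos_of_pos (by linarith)
  have hbeta : ∀ s : ℝ, betaK (2 - α) s = s ^ (1 - α) / G := by
    intro s
    unfold betaK
    rw [show (2 - α) - 1 = 1 - α by ring, hGdef]
  have hconc : StrictConcaveOn ℝ (Set.Ici 0) fun x : ℝ => x ^ (1 - α) :=
    Real.strictConcaveOn_rpow (by linarith) (by linarith)
  -- monotonicity of partition (non-strict)
  have tle : ∀ i j : ℕ, i ≤ j → j ≤ N → t i ≤ t j := by
    intro i j hij hjN
    rcases eq_or_lt_of_le hij with rfl | h
    · exact le_refl _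
    · exact (hmono i j h hjN).le
  have htau : ∀ k : ℕ, 1 ≤ k → k ≤ N → 0 < t k - t (k - 1) := by
    intro k hk1 hkN
    have := hmono (k - 1) k (by omega) hkN
    linarith
  -- value of a
  have haval : ∀ n k : ℕ, 1 ≤ k → k ≤ n → n ≤ N →
      a n (n - k) = ((t n - t (k-1)) ^ (1-α) - (t n - t k) ^ (1-α)) / (G * (t k - t (k-1))) := by
    intro n k hk1 hkn hnN
    rw [ha n k hk1 hkn hnN, hbeta, hbeta]
    have hτ := htau k hk1 (le_trans hkn hnN)
    field_simp
  -- positivity of a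
  have hapos : ∀ n k : ℕ, 1 ≤ k → k ≤ n → n ≤ N → 0 < a n (n - k) := by
    intro n k hk1 hkn hnN
    rw [haval n k hk1 hkn hnN]
    have hτ := htau k hk1 (le_trans hkn hnN)
    have hy : (0:ℝ) ≤ t n - t k := by have := tle k n hkn hnN; linarith
    have hxy : t n - t k < t n - t (k-1) := by
      have := hmono (k-1) k (by omega) (le_trans hkn hnN); linarith
    have := Real.rpow_lt_rpow hy hxy (by linarith : (0:ℝ) < 1 - α)
    have hden : 0 < G * (t k - t (k-1)) := mul_pos hG hτ
    exact div_pos (by linarith) hden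
  -- strict monotonicity: a j (j-(k+1)) > a j (j-k)
  have hamono : ∀ j k : ℕ, 1 ≤ k → k + 1 ≤ j → j ≤ N →
      a j (j - k) < a j (j - (k+1)) := by
    intro j k hk1 hkj hjN
    have h1 := haval j k hk1 (by omega) hjN
    have h2 := haval j (k+1) (by omega) hkj hjN
    simp only [Nat.add_sub_cancel] at h2
    set y2 := t j - t (k+1) with hy2
    set y1 := t j - t k with hy1
    set y0 := t j - t (k-1) with hy0
    have hy2m : (0:ℝ) ≤ y2 := by have := tle (k+1) j hkj hjN; simp [hy2]; linarith
    have h21 : y2 < y1 := by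
      have := hmono k (k+1) (by omega) (le_trans hkj hjN); simp [hy1, hy2]; linarith
    have h10 : y1 < y0 := by
      have := hmono (k-1) k (by omega) (le_trans (by omega : k ≤ j) hjN)
      simp [hy0, hy1]; linarith
    have hslope := hconc.slope_anti_adjacent (x := y2) (y := y1) (z := y0)
      hy2m (Set.mem_Ici.mpr (by linarith)) h21 h10
    have e1 : t k - t (k-1) = y0 - y1 := by rw [hy0, hy1]; ring
    have e2 : t (k+1) - t k = y1 - y2 := by rw [hy1, hy2]; ring
    rw [h1, h2, e1, e2]
    rw [div_lt_div_iff₀ (by nlinarith) (by nlinarith)]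
    rw [div_lt_div_iff₀ (by linarith) (by linarith)] at hslope
    nlinarith [hG]
  -- value of a k 0 : a k 0 * (G * τ^α) = 1
  have hak : ∀ k : ℕ, 1 ≤ k → k ≤ N → a k 0 * (G * (t k - t (k-1)) ^ α) = 1 := by
    intro k hk1 hkN
    have h := haval k k hk1 le_rfl hkN
    simp only [Nat.sub_self] at h
    have hτ := htau k hk1 hkN
    rw [h, sub_self, Real.zero_rpow (by linarith : (1:ℝ) - α ≠ 0)]
    rw [div_mul_eq_mul_div, div_eq_one_iff_eq (by positivity)]
    have : (t k - t (k-1)) ^ (1-α) * (t k - t (k-1)) ^ α = (t k - t (k-1)) := by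
      rw [← Real.rpow_add hτ]; norm_num
    nlinarith [hG, hτ]
  have hak0pos : ∀ k : ℕ, 1 ≤ k → k ≤ N → 0 < a k 0 := by
    intro k hk1 hkN
    have := hapos k k hk1 le_rfl hkN
    simpa using this
  intro n k hk1 hkn hnN
  have hn1 : 1 ≤ n := le_trans hk1 hkn
  -- key: positivity and sum identity, downward induction
  have key : ∀ m : ℕ, ∀ k : ℕ, n - k = m → 1 ≤ k → k ≤ n →
      0 < P n (n - k) ∧ (∑ j ∈ Finset.Icc k n, P n (n - j) * a j (j - k)) = 1 := by
    intro m
    induction m using Nat.strong_induction_on with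
    | _ m IH =>
      intro k hm hk1 hkn
      rcases eq_or_lt_of_le hkn with rfl | hlt
      · -- k = n
        simp only [Nat.sub_self]
        have hP := hP0 k hk1 hnN
        have hapos0 := hak0pos k hk1 hnN
        constructor
        · rw [hP]; positivity
        · rw [Finset.Icc_self, Finset.sum_singleton]
          simp only [Nat.sub_self]
          rw [hP]
          field_simp
      · -- k < n
        have hrec := hPrec n k hk1 hlt hnN
        have hterm : ∀ j ∈ Finset.Icc (k+1) n,
            0 < (a j (j - k - 1) - a j (j - k)) * P n (n - j) := by
          intro j hj
          rw [Finset.mem_Icc] at hj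
          have hPj : 0 < P n (n - j) :=
            (IH (n - j) (by omega) j rfl (by omega) hj.2).1
          have hmj : a j (j - k) < a j (j - (k+1)) :=
            hamono j k hk1 hj.1 (le_trans hj.2 hnN)
          rw [Nat.sub_sub] at *
          nlinarith
        have hsumpos : 0 < ∑ j ∈ Finset.Icc (k+1) n,
            (a j (j - k - 1) - a j (j - k)) * P n (n - j) :=
          Finset.sum_pos hterm (by rw [Finset.nonempty_Icc]; omega)
        have hP_pos : 0 < P n (n - k) := by
          rw [hrec]
          have := hak0pos k hk1 (le_trans hkn hnN)
          positivity
        refine ⟨hP_pos, ?_⟩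
        -- split sum
        have hsplit : (∑ j ∈ Finset.Icc k n, P n (n - j) * a j (j - k)) =
            P n (n - k) * a k 0 + ∑ j ∈ Finset.Icc (k+1) n, P n (n - j) * a j (j - k) := by
          rw [show Finset.Icc k n = insert k (Finset.Icc (k+1) n) by
            rw [Finset.Icc_add_one_left_eq_Ioc, Finset.Ioc_insert_left hkn]]
          rw [Finset.sum_insert (by simp [Finset.Icc_add_one_left_eq_Ioc])]
          simp
        have ha0 := hak0pos k hk1 (le_trans hkn hnN)
        have hPa : P n (n - k) * a k 0 = ∑ j ∈ Finset.Icc (k+1) n,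
            (a j (j - k - 1) - a j (j - k)) * P n (n - j) := by
          rw [hrec]; field_simp
        rw [hsplit, hPa, ← Finset.sum_add_distrib]
        have : ∀ j ∈ Finset.Icc (k+1) n,
            (a j (j - k - 1) - a j (j - k)) * P n (n - j) + P n (n - j) * a j (j - k)
            = P n (n - j) * a j (j - (k+1)) := by
          intro j hj
          rw [Nat.sub_sub]; ring
        rw [Finset.sum_congr rfl this]
        exact (IH (n - (k+1)) (by omega) (k+1) rfl (by omega) (by omega)).2
  obtain ⟨hpos, hsum⟩ := key (n - k) k rfl hk1 hkn
  refine ⟨hpos, ?_⟩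
  have ha0 := hak0pos k hk1 (le_trans hkn hnN)
  have hak1 := hak k hk1 (le_trans hkn hnN)
  -- P n (n-k) * a k 0 ≤ 1
  have hrest : 0 ≤ ∑ j ∈ Finset.Icc (k+1) n, P n (n - j) * a j (j - k) := by
    apply Finset.sum_nonneg
    intro j hj
    rw [Finset.mem_Icc] at hj
    have hPj : 0 < P n (n - j) := (key (n - j) j rfl (by omega) hj.2).1
    have haj : 0 < a j (j - k) := hapos j k hk1 (by omega) (le_trans hj.2 hnN)
    positivity
  have hsplit : (∑ j ∈ Finset.Icc k n, P n (n - j) * a j (j - k)) =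
      P n (n - k) * a k 0 + ∑ j ∈ Finset.Icc (k+1) n, P n (n - j) * a j (j - k) := by
    rw [show Finset.Icc k n = insert k (Finset.Icc (k+1) n) by
      rw [Finset.Icc_add_one_left_eq_Ioc, Finset.Ioc_insert_left hkn]]
    rw [Finset.sum_insert (by simp [Finset.Icc_add_one_left_eq_Ioc])]
    simp
  rw [hsplit] at hsum
  have hle : P n (n - k) * a k 0 ≤ 1 := by linarith
  have hGτ : 0 < G * (t k - t (k-1)) ^ α := by
    have := htau k hk1 (le_trans hkn hnN); positivity
  calc P n (n - k) = P n (n - k) * a k 0 * (G * (t k - t (k-1)) ^ α) := by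
        rw [mul_assoc, hak1, mul_one]
    _ ≤ 1 * (G * (t k - t (k-1)) ^ α) := by
        apply mul_le_mul_of_nonneg_right hle hGτ.le
    _ = G * (t k - t (k-1)) ^ α := by ring
end

section
/- Let 0 = t_0 < t_1 < ⋯ < t_N be a partition of [0,T] with step sizes τ_k = t_k − t_{k−1}, let 0 < α < 1, and let a^{(n)}_{n−k} be the nonuniform L1 weights and P^{(n)}_{n−k} the complementary discrete convolution kernels. Then the discrete orthogonality relation holds: for all 1 ≤ k ≤ n ≤ N, Σ_{j=k}^{n} P^{(n)}_{n−j} a^{(j)}_{j−k} = 1. -/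
/-!
Peeling off the diagonal term `j = k`, the defining recursion of `P^{(n)}_{n-k}` says exactly that
the orthogonality sum at level `k` equals the one at level `k + 1`; at level `n` the sum is
`P^{(n)}_0 a^{(n)}_0 = 1`. The only analytic input is `a^{(k)}_0 = β_{2-α}(τ_k)/τ_k ≠ 0`.
-/

theorem betaK_zero {ν : ℝ} (hν : ν ≠ 1) : betaK ν 0 = 0 := by
  rw [betaK, Real.zero_rpow (sub_ne_zero.mpr hν), zero_div]

theorem betaK_pos {ν t : ℝ} (hν : 0 < ν) (ht : 0 < t) : 0 < betaK ν t :=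
  div_pos (Real.rpow_pos_of_pos ht _) (Real.Gamma_pos_of_pos hν)

section Orthogonality

variable {𝕜 : Type*} [Field 𝕜] {n : ℕ} {a : ℕ → ℕ → 𝕜} {p : ℕ → 𝕜}

theorem sum_complementary_mul_eq_succ (k : ℕ) (hk : a k 0 ≠ 0)
    (hpk : p (n - k) = (1 / a k 0) *
      ∑ j ∈ Finset.Icc (k + 1) n, (a j (j - k - 1) - a j (j - k)) * p (n - j))
    (hkn : k ≤ n) :
    ∑ j ∈ Finset.Icc k n, p (n - j) * a j (j - k) =
      ∑ j ∈ Finset.Icc (k + 1) n, p (n - j) * a j (j - (k + 1)) := by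
  have hdiag : p (n - k) * a k 0 =
      ∑ j ∈ Finset.Icc (k + 1) n, (a j (j - k - 1) - a j (j - k)) * p (n - j) := by
    rw [hpk]
    field_simp
  rw [← Finset.insert_Icc_add_one_left_eq_Icc hkn, Finset.sum_insert (by simp), Nat.sub_self,
    hdiag, ← Finset.sum_add_distrib]
  refine Finset.sum_congr rfl fun j _ => ?_
  rw [Nat.sub_sub]
  ring

theorem sum_complementary_mul_eq_one (ha : ∀ k, 1 ≤ k → k ≤ n → a k 0 ≠ 0)
    (hp0 : p 0 = 1 / a n 0)
    (hprec : ∀ k, 1 ≤ k → k + 1 ≤ n → p (n - k) = (1 / a k 0) *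
      ∑ j ∈ Finset.Icc (k + 1) n, (a j (j - k - 1) - a j (j - k)) * p (n - j))
    (k : ℕ) (hk : 1 ≤ k) (hkn : k ≤ n) :
    ∑ j ∈ Finset.Icc k n, p (n - j) * a j (j - k) = 1 := by
  induction hkn using Nat.decreasingInduction with
  | self =>
    rw [Finset.Icc_self, Finset.sum_singleton, Nat.sub_self, hp0]
    exact one_div_mul_cancel (ha n hk le_rfl)
  | of_succ k hkn ih =>
    rw [sum_complementary_mul_eq_succ k (ha k hk hkn.le) (hprec k hk hkn) hkn.le]
    exact ih (by omega)

end Orthogonality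

theorem stmt_3_general (N : ℕ) (t : ℕ → ℝ) (α : ℝ)
    (hα1 : α < 1)
    (hmono : ∀ i j : ℕ, i < j → j ≤ N → t i < t j)
    (a : ℕ → ℕ → ℝ)
    (ha : ∀ n k : ℕ, 1 ≤ k → k ≤ n → n ≤ N →
      a n (n - k) =
        (betaK (2 - α) (t n - t (k - 1)) - betaK (2 - α) (t n - t k)) / (t k - t (k - 1)))
    (P : ℕ → ℕ → ℝ)
    (hP0 : ∀ n : ℕ, 1 ≤ n → n ≤ N → P n 0 = 1 / a n 0)
    (hPrec : ∀ n k : ℕ, 1 ≤ k → k + 1 ≤ n → n ≤ N →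
      P n (n - k) = (1 / a k 0) *
        ∑ j ∈ Finset.Icc (k + 1) n, (a j (j - k - 1) - a j (j - k)) * P n (n - j)) :
    ∀ n k : ℕ, 1 ≤ k → k ≤ n → n ≤ N →
      ∑ j ∈ Finset.Icc k n, P n (n - j) * a j (j - k) = 1 := by
  have ha0 : ∀ k, 1 ≤ k → k ≤ N → a k 0 ≠ 0 := by
    intro k hk hkN
    have hτ : 0 < t k - t (k - 1) := sub_pos.mpr (hmono _ k (by omega) hkN)
    have hdiag := ha k k hk le_rfl hkN
    rw [Nat.sub_self, sub_self, betaK_zero (by linarith), sub_zero] at hdiag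
    rw [hdiag]
    exact (div_pos (betaK_pos (by linarith) hτ) hτ).ne'
  intro n k hk hkn hnN
  exact sum_complementary_mul_eq_one (fun j hj hjn => ha0 j hj (hjn.trans hnN))
    (hP0 n (hk.trans hkn) hnN) (fun j hj hjn => hPrec n j hj hjn hnN) k hk hkn

theorem stmt_3 (T : ℝ) (N : ℕ) (hN : 1 ≤ N) (t : ℕ → ℝ) (α : ℝ)
    (hα0 : 0 < α) (hα1 : α < 1)
    (ht0 : t 0 = 0) (htN : t N = T)
    (hmono : ∀ i j : ℕ, i < j → j ≤ N → t i < t j)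
    (a : ℕ → ℕ → ℝ)
    (ha : ∀ n k : ℕ, 1 ≤ k → k ≤ n → n ≤ N →
      a n (n - k) =
        (betaK (2 - α) (t n - t (k - 1)) - betaK (2 - α) (t n - t k)) / (t k - t (k - 1)))
    (P : ℕ → ℕ → ℝ)
    (hP0 : ∀ n : ℕ, 1 ≤ n → n ≤ N → P n 0 = 1 / a n 0)
    (hPrec : ∀ n k : ℕ, 1 ≤ k → k + 1 ≤ n → n ≤ N →
      P n (n - k) = (1 / a k 0) *
        ∑ j ∈ Finset.Icc (k + 1) n, (a j (j - k - 1) - a j (j - k)) * P n (n - j)) :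
    ∀ n k : ℕ, 1 ≤ k → k ≤ n → n ≤ N →
      ∑ j ∈ Finset.Icc k n, P n (n - j) * a j (j - k) = 1 :=
  stmt_3_general N t α hα1 hmono a ha P hP0 hPrec
end

section
/- Let H be a real inner product space, let n ≥ 1, let a_0 ≥ a_1 ≥ ⋯ ≥ a_{n−1} > 0 be a nonincreasing positive sequence of reals, and let u^0, u^1, …, u^n ∈ H. Then 2 Σ_{k=1}^{n} a_{n−k} ⟨u^k − u^{k−1}, u^n⟩ ≥ Σ_{k=1}^{n} a_{n−k} (‖u^k‖² − ‖u^{k−1}‖²). -/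
open scoped RealInnerProductSpace

private lemma key_id {H : Type*} [NormedAddCommGroup H] [InnerProductSpace ℝ H]
    (v w x : H) :
    2 * ⟪v - w, x⟫ - (‖v‖ ^ 2 - ‖w‖ ^ 2) = ‖x - w‖ ^ 2 - ‖x - v‖ ^ 2 := by
  have h1 := @norm_sub_sq_real H _ _ x v
  have h2 := @norm_sub_sq_real H _ _ x w
  rw [inner_sub_left]
  have c1 := real_inner_comm v x
  have c2 := real_inner_comm w x
  nlinarith [h1, h2, c1, c2]

private lemma abel_aux (b g : ℕ → ℝ) (hg : ∀ k, 0 ≤ g k) :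
    ∀ n, 1 ≤ n → (∀ i j : ℕ, 1 ≤ i → i ≤ j → j ≤ n → b i ≤ b j) →
    b 1 * g 0 - b n * g n ≤ ∑ k ∈ Finset.Icc 1 n, b k * (g (k - 1) - g k) := by
  intro n
  induction n with
  | zero => intro h; omega
  | succ m ih =>
    intro _ hmono
    rcases Nat.eq_or_lt_of_le (Nat.one_le_iff_ne_zero.mpr (Nat.succ_ne_zero m)) with h1 | h1
    · obtain rfl : m = 0 := by omega
      simp only [zero_add, Finset.Icc_self, Finset.sum_singleton]
      have : (1:ℕ) - 1 = 0 := rfl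
      rw [this]; ring_nf; linarith [le_refl (b 1 * g 0)]
    · have hm : 1 ≤ m := Nat.lt_succ_iff.mp h1
      have hstep : ∑ k ∈ Finset.Icc 1 (m + 1), b k * (g (k - 1) - g k)
          = (∑ k ∈ Finset.Icc 1 m, b k * (g (k - 1) - g k))
            + b (m + 1) * (g (m + 1 - 1) - g (m + 1)) := by
        rw [← Finset.sum_Icc_succ_top (by omega : 1 ≤ m + 1)]
      have ihm := ih hm (fun i j hi hij hj => hmono i j hi hij (by omega))
      have hbm : b m ≤ b (m + 1) := hmono m (m + 1) hm (by omega) (le_refl _)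
      have hgm := hg m
      rw [hstep]
      simp only [Nat.add_sub_cancel]
      nlinarith [ihm, hbm, hgm]

theorem stmt_6 {H : Type*} [NormedAddCommGroup H] [InnerProductSpace ℝ H]
    (n : ℕ) (hn : 1 ≤ n) (a : ℕ → ℝ)
    (hpos : ∀ j : ℕ, j ≤ n - 1 → 0 < a j)
    (hmono : ∀ i j : ℕ, i ≤ j → j ≤ n - 1 → a j ≤ a i)
    (u : ℕ → H) :
    ∑ k ∈ Finset.Icc 1 n, a (n - k) * (‖u k‖ ^ 2 - ‖u (k - 1)‖ ^ 2) ≤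
      2 * ∑ k ∈ Finset.Icc 1 n, a (n - k) * ⟪u k - u (k - 1), u n⟫ := by
  set b : ℕ → ℝ := fun k => a (n - k) with hb
  set g : ℕ → ℝ := fun k => ‖u n - u k‖ ^ 2 with hg
  have hgnn : ∀ k, 0 ≤ g k := fun k => sq_nonneg _
  have hbmono : ∀ i j : ℕ, 1 ≤ i → i ≤ j → j ≤ n → b i ≤ b j := by
    intro i j hi hij hj
    exact hmono (n - j) (n - i) (by omega) (by omega)
  have habel := abel_aux b g hgnn n hn hbmono
  have hgn : g n = 0 := by simp [hg]
  have hb1 : 0 < b 1 := hpos (n - 1) (le_refl _)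
  have hlow : 0 ≤ ∑ k ∈ Finset.Icc 1 n, b k * (g (k - 1) - g k) := by
    have h0 : 0 ≤ b 1 * g 0 := mul_nonneg hb1.le (hgnn 0)
    have h1 : b n * g n = 0 := by rw [hgn]; ring
    linarith [habel, h0, h1]
  have heq : ∑ k ∈ Finset.Icc 1 n, b k * (g (k - 1) - g k)
      = 2 * (∑ k ∈ Finset.Icc 1 n, a (n - k) * ⟪u k - u (k - 1), u n⟫)
        - ∑ k ∈ Finset.Icc 1 n, a (n - k) * (‖u k‖ ^ 2 - ‖u (k - 1)‖ ^ 2) := by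
    rw [Finset.mul_sum, ← Finset.sum_sub_distrib]
    apply Finset.sum_congr rfl
    intro k _
    have hk := key_id (u k) (u (k - 1)) (u n)
    simp only [hb, hg]
    linear_combination (-(a (n - k))) * hk
  linarith [hlow, heq]
end

section
/- Let T > 0, r ≥ 1, and 0 < α < 1, and consider the graded mesh t_n = T (n/N)^r on [0,T]. Then there exists a constant C = C(r, α, T) > 0, independent of N, such that for all N ≥ 1 and all indices with 1 ≤ j ≤ n−2, n ≤ N, one has (t_n − t_j)^{1−α} − (t_n − t_{j+1})^{1−α} ≤ C N^{−(1−α)} (n − j − 1)^{−α}. -/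
/-- The graded temporal mesh `t_n = T (n/N)^r`. -/
noncomputable def gm (T r : ℝ) (N n : ℕ) : ℝ := T * ((n : ℝ) / (N : ℝ)) ^ r

/-- Tangent line inequality for the convex function `x ↦ x ^ r`, `r ≥ 1`. -/
lemma tangent_le_aux {a x r : ℝ} (ha : 0 < a) (hx : 0 ≤ x) (hr : 1 ≤ r) :
    a ^ r + r * a ^ (r - 1) * (x - a) ≤ x ^ r := by
  have hs : -1 ≤ x / a - 1 := by
    have : 0 ≤ x / a := div_nonneg hx ha.le
    linarith
  have h := one_add_mul_self_le_rpow_one_add hs hr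
  have e1 : 1 + (x / a - 1) = x / a := by ring
  rw [e1, Real.div_rpow hx ha.le] at h
  have har : 0 < a ^ r := Real.rpow_pos_of_pos ha r
  have h2 := mul_le_mul_of_nonneg_right h har.le
  rw [div_mul_cancel₀ _ har.ne'] at h2
  have key : a ^ (r - 1) * a = a ^ r := by
    rw [← Real.rpow_add_one ha.ne' (r - 1)]; ring_nf
  have e2 : (1 + r * (x / a - 1)) * a ^ r = a ^ r + r * a ^ (r - 1) * (x - a) := by
    rw [← key]; field_simp
  linarith [e2 ▸ h2]

/-- Tangent line inequality for the concave function `x ↦ x ^ p`, `0 ≤ p ≤ 1`. -/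
lemma concave_tangent_aux {x y p : ℝ} (hy : 0 < y) (hxy : y ≤ x) (hp1 : 0 ≤ p) (hp2 : p ≤ 1) :
    x ^ p ≤ y ^ p + p * y ^ (p - 1) * (x - y) := by
  have hs : -1 ≤ x / y - 1 := by
    have : 0 ≤ x / y := div_nonneg (hy.le.trans hxy) hy.le
    linarith
  have h := rpow_one_add_le_one_add_mul_self hs hp1 hp2
  have e1 : 1 + (x / y - 1) = x / y := by ring
  rw [e1, Real.div_rpow (hy.le.trans hxy) hy.le] at h
  have hyp : 0 < y ^ p := Real.rpow_pos_of_pos hy p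
  have h2 := mul_le_mul_of_nonneg_right h hyp.le
  rw [div_mul_cancel₀ _ hyp.ne'] at h2
  have key : y ^ (p - 1) * y = y ^ p := by
    rw [← Real.rpow_add_one hy.ne' (p - 1)]; ring_nf
  have e2 : (1 + p * (x / y - 1)) * y ^ p = y ^ p + p * y ^ (p - 1) * (x - y) := by
    rw [← key]; field_simp
  linarith [e2 ▸ h2]

set_option maxHeartbeats 1000000 in
theorem stmt_8 (T r α : ℝ) (hT : 0 < T) (hr : 1 ≤ r) (h0 : 0 < α) (h1 : α < 1) :
    ∃ C > 0, ∀ N n j : ℕ, 1 ≤ N → 1 ≤ j → j + 2 ≤ n → n ≤ N →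
      (gm T r N n - gm T r N j) ^ (1 - α) - (gm T r N n - gm T r N (j + 1)) ^ (1 - α) ≤
        C * (N : ℝ) ^ (-(1 - α)) * ((n - j - 1 : ℕ) : ℝ) ^ (-α) := by
  have hTr : 0 < T * r := mul_pos hT (by linarith)
  refine ⟨(1 - α) * (T * r) ^ (1 - α), mul_pos (by linarith) (Real.rpow_pos_of_pos hTr _), ?_⟩
  intro N n j hN hj hjn hnN
  set p : ℝ := 1 - α with hp
  have hp0 : 0 < p := by simp [hp]; linarith
  have hp1 : p ≤ 1 := by simp [hp]; linarith
  have hNpos : (0 : ℝ) < N := by exact_mod_cast hN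
  have hjR : (1 : ℝ) ≤ (j : ℝ) := by exact_mod_cast hj
  have hnR : (j : ℝ) + 2 ≤ (n : ℝ) := by exact_mod_cast hjn
  have hnNR : (n : ℝ) ≤ (N : ℝ) := by exact_mod_cast hnN
  set m : ℝ := (j : ℝ) + 1 with hm
  have hmpos : 0 < m := by simp [hm]; linarith
  have hA : 0 < T / (N : ℝ) ^ r := div_pos hT (Real.rpow_pos_of_pos hNpos r)
  set A : ℝ := T / (N : ℝ) ^ r with hAdef
  -- rewrite gm differences
  have gmrw : ∀ k : ℕ, gm T r N k = A * (k : ℝ) ^ r := by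
    intro k
    rw [gm, hAdef, Real.div_rpow (Nat.cast_nonneg k) (Nat.cast_nonneg N)]
    ring
  have hcast : ((j + 1 : ℕ) : ℝ) = m := by push_cast [hm]; ring
  set x : ℝ := gm T r N n - gm T r N j with hx
  set y : ℝ := gm T r N n - gm T r N (j + 1) with hy
  set B : ℝ := A * (r * m ^ (r - 1)) with hB
  have hBpos : 0 < B := by
    apply mul_pos hA
    exact mul_pos (by linarith) (Real.rpow_pos_of_pos hmpos _)
  set k : ℝ := ((n - j - 1 : ℕ) : ℝ) with hk
  have hkval : k = (n : ℝ) - m := by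
    rw [hk, hm]
    have : (n - j - 1 : ℕ) = n - (j + 1) := by omega
    rw [this]
    push_cast [Nat.cast_sub (by omega : j + 1 ≤ n)]
    ring
  have hk1 : 1 ≤ k := by rw [hkval]; linarith
  -- y ≥ B * k
  have hylb : B * k ≤ y := by
    have h := tangent_le_aux hmpos (by positivity : (0:ℝ) ≤ (n : ℝ)) hr
    rw [hy, gmrw, gmrw, hcast, hkval, hB]
    have hA' := hA
    nlinarith [Real.rpow_pos_of_pos hmpos (r - 1)]
  -- x - y ≤ B
  have hdub : x - y ≤ B := by
    have h := tangent_le_aux hmpos (by positivity : (0:ℝ) ≤ (j : ℝ)) hr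
    rw [hx, hy, gmrw, gmrw, gmrw, hcast, hB]
    nlinarith [Real.rpow_pos_of_pos hmpos (r - 1)]
  have hypos : 0 < y := lt_of_lt_of_le (by nlinarith) hylb
  have hxy : y ≤ x := by
    have hmono : gm T r N j ≤ gm T r N (j + 1) := by
      rw [gmrw, gmrw, hcast]
      have : (j : ℝ) ^ r ≤ m ^ r :=
        Real.rpow_le_rpow (by positivity) (by rw [hm]; linarith) (by linarith)
      nlinarith
    rw [hx, hy]
    exact sub_le_sub_left hmono _
  -- concavity bound
  have main : x ^ p - y ^ p ≤ p * y ^ (p - 1) * (x - y) := by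
    have := concave_tangent_aux hypos hxy hp0.le hp1
    linarith
  -- y ^ (p-1) ≤ (B*k)^(p-1)
  have hmono : y ^ (p - 1) ≤ (B * k) ^ (p - 1) := by
    apply Real.rpow_le_rpow_of_nonpos (by positivity) hylb (by linarith)
  have hBk : (B * k) ^ (p - 1) = B ^ (p - 1) * k ^ (p - 1) :=
    Real.mul_rpow hBpos.le (by linarith)
  -- combine: x^p - y^p ≤ p * B^p * k^(p-1)
  have step : x ^ p - y ^ p ≤ p * B ^ p * k ^ (p - 1) := by
    have h1 : p * y ^ (p - 1) * (x - y) ≤ p * (B * k) ^ (p - 1) * B := by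
      have hy' : 0 ≤ y ^ (p - 1) := (Real.rpow_pos_of_pos hypos _).le
      have hxy0 : 0 ≤ x - y := by linarith
      have := mul_le_mul hmono hdub hxy0 (Real.rpow_nonneg (by positivity) _)
      nlinarith
    have h2 : p * (B * k) ^ (p - 1) * B = p * B ^ p * k ^ (p - 1) := by
      have hBB : B ^ (p - 1) * B = B ^ p := by
        rw [← Real.rpow_add_one hBpos.ne' (p - 1)]; ring_nf
      rw [hBk, ← hBB]; ring
    linarith [h2 ▸ h1]
  -- B ≤ T*r/N
  have hBle : B ≤ T * r / N := by
    rw [hB, hAdef]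
    have hm_le : m ≤ (N : ℝ) := by rw [hm]; linarith
    have h1 : m ^ (r - 1) ≤ (N : ℝ) ^ (r - 1) :=
      Real.rpow_le_rpow hmpos.le hm_le (by linarith)
    have hNr : (N : ℝ) ^ (r - 1) * (N : ℝ) = (N : ℝ) ^ r := by
      rw [← Real.rpow_add_one hNpos.ne' (r - 1)]; ring_nf
    rw [div_mul_eq_mul_div, div_le_div_iff₀ (Real.rpow_pos_of_pos hNpos r) hNpos]
    have hstep : T * r * m ^ (r - 1) * N ≤ T * r * (N : ℝ) ^ (r - 1) * N :=
      mul_le_mul_of_nonneg_right (mul_le_mul_of_nonneg_left h1 hTr.le) hNpos.le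
    calc T * (r * m ^ (r - 1)) * N = T * r * m ^ (r - 1) * N := by ring
      _ ≤ T * r * (N : ℝ) ^ (r - 1) * N := hstep
      _ = T * r * ((N : ℝ) ^ (r - 1) * N) := by ring
      _ = T * r * (N : ℝ) ^ r := by rw [hNr]
  -- B^p ≤ (T*r)^p * N^(-p)
  have hBp : B ^ p ≤ (T * r) ^ p * (N : ℝ) ^ (-p) := by
    have h1 : B ^ p ≤ (T * r / N) ^ p :=
      Real.rpow_le_rpow hBpos.le hBle hp0.le
    have h2 : (T * r / N) ^ p = (T * r) ^ p * (N : ℝ) ^ (-p) := by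
      rw [Real.div_rpow hTr.le hNpos.le, Real.rpow_neg hNpos.le, div_eq_mul_inv]
    linarith [h2 ▸ h1]
  have hkp : k ^ (p - 1) = k ^ (-α) := by rw [hp]; ring_nf
  have hkpos : 0 < k ^ (-α) := Real.rpow_pos_of_pos (by linarith) _
  calc x ^ p - y ^ p ≤ p * B ^ p * k ^ (p - 1) := step
    _ = p * B ^ p * k ^ (-α) := by rw [hkp]
    _ ≤ p * ((T * r) ^ p * (N : ℝ) ^ (-p)) * k ^ (-α) := by
        have := mul_le_mul_of_nonneg_right (mul_le_mul_of_nonneg_left hBp hp0.le) hkpos.le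
        linarith
    _ = (1 - α) * (T * r) ^ (1 - α) * (N : ℝ) ^ (-(1 - α)) * k ^ (-α) := by
        rw [hp]; ring
end

section
/- Let E be a real Banach space, T > 0, 0 < α₀ < 1, and 0 < t₁ ≤ T. Let u : (0,t₁] → E be continuously differentiable with ‖u'(θ)‖ ≤ C_u θ^{α₀−1} for all θ ∈ (0,t₁], and let k̃ : (0,T] → ℝ be measurable with |k̃(t)| ≤ C_k t^{−α₀}(1 + |ln t|) for all t ∈ (0,T]. Then there is a constant C, depending only on C_u, C_k, α₀ and T, such that ‖ ∫_0^{t₁} k̃(t₁ − s) ( ∫_{t₁}^{s} u'(θ) dθ ) ds ‖ ≤ C t₁ (1 + |ln t₁|). -/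
/-!
The inner integral is at most `(C_u/α₀)(t₁^α₀ - s^α₀) ≤ (C_u/α₀)(t₁ - s)^α₀` by subadditivity
of `x ↦ x^α₀`, and this power cancels the singularity `(t₁ - s)^{-α₀}` of the kernel. What is
left is `(C_u C_k/α₀)(1 + |ln (t₁ - s)|)`, whose integral over `[0, t₁]` is at most
`(2 C_u C_k/α₀) t₁ (1 + |ln t₁|)`, by comparison with the explicitly integrable
`1 + |ln t₁| + ln t₁ - ln r ≥ 1 + |ln r|`.
-/

open MeasureTheory intervalIntegral Real

lemma Real.rpow_sub_rpow_le_sub_rpow {x y p : ℝ} (hy : 0 ≤ y) (hyx : y ≤ x) (hp0 : 0 ≤ p)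
    (hp1 : p ≤ 1) : x ^ p - y ^ p ≤ (x - y) ^ p := by
  have h := Real.rpow_add_le_add_rpow (sub_nonneg.2 hyx) hy hp0 hp1
  rw [sub_add_cancel] at h
  linarith

lemma norm_integral_le_of_norm_le_mul_rpow_sub_one {E : Type*} [NormedAddCommGroup E]
    [NormedSpace ℝ E] {f : ℝ → E} {C α s t : ℝ} (hC : 0 ≤ C) (hα0 : 0 < α) (hα1 : α ≤ 1)
    (hs : 0 < s) (hst : s ≤ t) (hf : ∀ θ ∈ Set.Ioc 0 t, ‖f θ‖ ≤ C * θ ^ (α - 1)) :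
    ‖∫ θ in s..t, f θ‖ ≤ C / α * (t - s) ^ α := by
  have hpow : IntervalIntegrable (fun θ : ℝ => θ ^ (α - 1)) volume s t :=
    intervalIntegrable_rpow' (by linarith)
  calc ‖∫ θ in s..t, f θ‖ ≤ ∫ θ in s..t, C * θ ^ (α - 1) :=
        norm_integral_le_of_norm_le hst
          (Filter.Eventually.of_forall fun θ hθ => hf θ ⟨hs.trans hθ.1, hθ.2⟩)
          (hpow.const_mul C)
    _ = C / α * (t ^ α - s ^ α) := by
        rw [intervalIntegral.integral_const_mul, integral_rpow (Or.inl (by linarith)),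
          sub_add_cancel]
        ring
    _ ≤ C / α * (t - s) ^ α := by
        gcongr
        exact Real.rpow_sub_rpow_le_sub_rpow hs.le hst hα0.le hα1

lemma one_add_abs_log_le_of_le {r t : ℝ} (hr : 0 < r) (hrt : r ≤ t) :
    1 + |log r| ≤ 1 + |log t| + log t - log r := by
  have hlog : log r ≤ log t := log_le_log hr hrt
  have := neg_abs_le (log t)
  have := le_abs_self (log t)
  cases abs_cases (log r) <;> linarith

lemma intervalIntegrable_one_add_abs_log {a b : ℝ} :
    IntervalIntegrable (fun r => 1 + |log r|) volume a b :=
  _root_.intervalIntegrable_const.add intervalIntegrable_log'.abs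

lemma integral_one_add_abs_log_le {t : ℝ} (ht : 0 < t) :
    ∫ r in (0 : ℝ)..t, (1 + |log r|) ≤ 2 * t * (1 + |log t|) := by
  have hlog : IntervalIntegrable log volume 0 t := intervalIntegrable_log'
  calc ∫ r in (0 : ℝ)..t, (1 + |log r|)
      ≤ ∫ r in (0 : ℝ)..t, (1 + |log t| + log t - log r) :=
        integral_mono_on_of_le_Ioo ht.le intervalIntegrable_one_add_abs_log
          (_root_.intervalIntegrable_const.sub hlog)
          fun r hr => one_add_abs_log_le_of_le hr.1 hr.2.le
    _ = t * (2 + |log t|) := by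
        rw [integral_sub _root_.intervalIntegrable_const hlog, intervalIntegral.integral_const,
          integral_log_from_zero, smul_eq_mul]
        ring
    _ ≤ 2 * t * (1 + |log t|) := by nlinarith [abs_nonneg (log t)]

lemma norm_smul_integral_le_of_rpow_bounds {E : Type*} [NormedAddCommGroup E]
    [NormedSpace ℝ E] {u' : ℝ → E} {k : ℝ → ℝ} {Cu Ck α s t : ℝ} (hCu : 0 ≤ Cu)
    (hCk : 0 ≤ Ck) (hα0 : 0 < α) (hα1 : α ≤ 1) (hs : 0 < s) (hst : s ≤ t)
    (hu' : ∀ θ ∈ Set.Ioc 0 t, ‖u' θ‖ ≤ Cu * θ ^ (α - 1))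
    (hk : ∀ r ∈ Set.Ioc 0 t, |k r| ≤ Ck * r ^ (-α) * (1 + |log r|)) :
    ‖k (t - s) • ∫ θ in t..s, u' θ‖ ≤ Cu * Ck / α * (1 + |log (t - s)|) := by
  rcases hst.eq_or_lt with rfl | hlt
  · simp only [integral_same, smul_zero, norm_zero]
    positivity
  have hr : 0 < t - s := sub_pos.2 hlt
  have hinner : ‖∫ θ in t..s, u' θ‖ ≤ Cu / α * (t - s) ^ α := by
    rw [integral_symm, norm_neg]
    exact norm_integral_le_of_norm_le_mul_rpow_sub_one hCu hα0 hα1 hs hst hu'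
  calc ‖k (t - s) • ∫ θ in t..s, u' θ‖ = |k (t - s)| * ‖∫ θ in t..s, u' θ‖ := by
        rw [norm_smul, Real.norm_eq_abs]
    _ ≤ Ck * (t - s) ^ (-α) * (1 + |log (t - s)|) * (Cu / α * (t - s) ^ α) := by
        gcongr
        exact hk (t - s) ⟨hr, by linarith⟩
    _ = Cu * Ck / α * (1 + |log (t - s)|) := by
        rw [rpow_neg hr.le]
        field_simp

theorem stmt_10_general (T α₀ Cu Ck : ℝ) (h0 : 0 < α₀) (h1 : α₀ < 1) :
    ∃ C > 0, ∀ (E : Type) [NormedAddCommGroup E] [NormedSpace ℝ E] [CompleteSpace E],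
      ∀ t₁ : ℝ, 0 < t₁ → t₁ ≤ T →
      ∀ (u u' : ℝ → E) (k : ℝ → ℝ),
        (∀ θ ∈ Set.Ioc (0:ℝ) t₁, HasDerivAt u (u' θ) θ) →
        ContinuousOn u' (Set.Ioc 0 t₁) →
        (∀ θ ∈ Set.Ioc (0:ℝ) t₁, ‖u' θ‖ ≤ Cu * θ ^ (α₀ - 1)) →
        Measurable k →
        (∀ s ∈ Set.Ioc (0:ℝ) T, |k s| ≤ Ck * s ^ (-α₀) * (1 + |Real.log s|)) →
        ‖∫ s in (0:ℝ)..t₁, k (t₁ - s) • (∫ θ in t₁..s, u' θ)‖ ≤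
          C * t₁ * (1 + |Real.log t₁|) := by
  refine ⟨max (2 * Cu * Ck / α₀) 1, by positivity, ?_⟩
  intro E _ _ _ t₁ ht₁ ht₁T u u' k _ _ hu' _ hk
  have hk' : ∀ r ∈ Set.Ioc 0 t₁, |k r| ≤ Ck * r ^ (-α₀) * (1 + |log r|) :=
    fun r hr => hk r ⟨hr.1, hr.2.trans ht₁T⟩
  have ht₁mem : t₁ ∈ Set.Ioc 0 t₁ := ⟨ht₁, le_rfl⟩
  have hCu : 0 ≤ Cu := nonneg_of_mul_nonneg_left ((norm_nonneg _).trans (hu' t₁ ht₁mem))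
    (rpow_pos_of_pos ht₁ _)
  have hCk : 0 ≤ Ck := nonneg_of_mul_nonneg_left (nonneg_of_mul_nonneg_left
    ((abs_nonneg _).trans (hk' t₁ ht₁mem)) (by positivity)) (rpow_pos_of_pos ht₁ _)
  have hbound :
      IntervalIntegrable (fun s => Cu * Ck / α₀ * (1 + |log (t₁ - s)|)) volume 0 t₁ := by
    have h := (intervalIntegrable_one_add_abs_log (a := 0) (b := t₁)).comp_sub_left t₁
    simpa using h.symm.const_mul (Cu * Ck / α₀)
  calc ‖∫ s in (0:ℝ)..t₁, k (t₁ - s) • (∫ θ in t₁..s, u' θ)‖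
      ≤ ∫ s in (0:ℝ)..t₁, Cu * Ck / α₀ * (1 + |log (t₁ - s)|) :=
        norm_integral_le_of_norm_le ht₁.le (Filter.Eventually.of_forall fun s hs =>
          norm_smul_integral_le_of_rpow_bounds hCu hCk h0 h1.le hs.1 hs.2 hu' hk') hbound
    _ = Cu * Ck / α₀ * ∫ r in (0:ℝ)..t₁, (1 + |log r|) := by
        rw [intervalIntegral.integral_const_mul, integral_comp_sub_left (fun r => 1 + |log r|),
          sub_self, sub_zero]
    _ ≤ Cu * Ck / α₀ * (2 * t₁ * (1 + |log t₁|)) := by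
        gcongr
        exact integral_one_add_abs_log_le ht₁
    _ = 2 * Cu * Ck / α₀ * t₁ * (1 + |log t₁|) := by ring
    _ ≤ max (2 * Cu * Ck / α₀) 1 * t₁ * (1 + |log t₁|) := by
        gcongr
        exact le_max_left _ _

theorem stmt_10 (T α₀ Cu Ck : ℝ) (hT : 0 < T) (h0 : 0 < α₀) (h1 : α₀ < 1) :
    ∃ C > 0, ∀ (E : Type) [NormedAddCommGroup E] [NormedSpace ℝ E] [CompleteSpace E],
      ∀ t₁ : ℝ, 0 < t₁ → t₁ ≤ T →
      ∀ (u u' : ℝ → E) (k : ℝ → ℝ),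
        (∀ θ ∈ Set.Ioc (0:ℝ) t₁, HasDerivAt u (u' θ) θ) →
        ContinuousOn u' (Set.Ioc 0 t₁) →
        (∀ θ ∈ Set.Ioc (0:ℝ) t₁, ‖u' θ‖ ≤ Cu * θ ^ (α₀ - 1)) →
        Measurable k →
        (∀ s ∈ Set.Ioc (0:ℝ) T, |k s| ≤ Ck * s ^ (-α₀) * (1 + |Real.log s|)) →
        ‖∫ s in (0:ℝ)..t₁, k (t₁ - s) • (∫ θ in t₁..s, u' θ)‖ ≤
          C * t₁ * (1 + |Real.log t₁|) :=
  stmt_10_general T α₀ Cu Ck h0 h1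
end
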